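/- Let X be a set, P a topological space, and F : X → Finset P a map with F(x) nonempty for all x. Equip X with the topology whose closed sets are generated (under finite unions and arbitrary intersections) by sets of the form {x ∈ X : F(x) ⊆ V} for V closed in P. Suppose U ⊆ X is a proper open set containing every x with F(x) a singleton, and suppose every element p ∈ P appearing in some F(x) also appears as F(s) = {p} for some s ∈ X (every 'phase point' is realized by a singleton). Then the complement of U contains no x whose F(x) meets ⋃_{F(s) singleton} F(s); in particular if additionally every x ≠ x₀ has F(x) consisting of realized points, then X \ U ⊆ {x₀} where F(x₀) = {p∞} for an unrealized point p∞. -/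
import Mathlib


open Topology

/-- abstract Lemma 4.6: let `F : X → Finset P` assign to each object the
finite set of `Z̃`-values of its HN factors, with `F x₀ = {pinf}` for the zero object
`x₀` and the unrealized point at infinity `pinf`. Equip `X` with the topology whose
closed sets are generated (under finite unions and arbitrary intersections) by the sets
`{x | F x ⊆ V}` for `V` closed in `P`. Let `R` be the set of points realized as the
value of a singleton (semistable) object other than `x₀`. If a proper open set `U`
contains every such singleton object, and every `x ≠ x₀` has `F x ⊆ R`, then no point of
the complement of `U` has `F`-value meeting `R`; in particular `X \ U ⊆ {x₀}`. -/
theorem stmt14 (X P : Type) [TopologicalSpace P] (F : X → Finset P)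
    (hne : ∀ x, (F x).Nonempty) (x₀ : X) (pinf : P)
    (hx₀ : (F x₀ : Set P) = {pinf})
    (hpinf : ¬ ∃ s : X, s ≠ x₀ ∧ (F s : Set P) = {pinf})
    (hreal : ∀ x : X, x ≠ x₀ →
      (F x : Set P) ⊆ {p : P | ∃ s : X, s ≠ x₀ ∧ (F s : Set P) = {p}})
    (U : Set X) (hUproper : U ≠ Set.univ)
    (hUsemi : ∀ x : X, x ≠ x₀ → (∃ p : P, (F x : Set P) = {p}) → x ∈ U) :
    ∀ t : TopologicalSpace X,
      t = TopologicalSpace.generateFrom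
            {W : Set X | ∃ V : Set P, IsClosed V ∧ W = {x | ¬ (F x : Set P) ⊆ V}} →
      IsOpen[t] U →
      (∀ x : X, x ∉ U →
          (F x : Set P) ∩ {p : P | ∃ s : X, s ≠ x₀ ∧ (F s : Set P) = {p}} = ∅) ∧
        Uᶜ ⊆ {x₀} := by
  intro t ht hU
  subst ht
  replace hU : TopologicalSpace.GenerateOpen {W : Set X | ∃ V : Set P, IsClosed V ∧ W = {x | ¬ (F x : Set P) ⊆ V}} U := hU
  have key : ∀ W : Set X,
      TopologicalSpace.GenerateOpen
        {W : Set X | ∃ V : Set P, IsClosed V ∧ W = {x | ¬ (F x : Set P) ⊆ V}} W →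
      ∀ x s : X, ∀ p : P, p ∈ (F x : Set P) → (F s : Set P) = {p} → s ∈ W → x ∈ W := by
    intro W hW
    induction hW with
    | basic W hWb =>
      rintro x s p hp hs hsW
      obtain ⟨V, hV, rfl⟩ := hWb
      intro hsub
      apply hsW
      rw [hs]
      rintro q rfl
      exact hsub hp
    | univ => intros; trivial
    | inter A B _ _ ihA ihB =>
      rintro x s p hp hs ⟨h1, h2⟩
      exact ⟨ihA x s p hp hs h1, ihB x s p hp hs h2⟩
    | sUnion S _ ih =>
      rintro x s p hp hs ⟨A, hA, hsA⟩
      exact ⟨A, hA, ih A hA x s p hp hs hsA⟩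
  have part1 : ∀ x : X, x ∉ U →
      (F x : Set P) ∩ {p : P | ∃ s : X, s ≠ x₀ ∧ (F s : Set P) = {p}} = ∅ := by
    intro x hx
    ext p
    simp only [Set.mem_inter_iff, Set.mem_setOf_eq, Set.mem_empty_iff_false, iff_false,
      not_and]
    rintro hp ⟨s, hs0, hsp⟩
    exact hx (key U hU x s p hp hsp (hUsemi s hs0 ⟨p, hsp⟩))
  refine ⟨part1, ?_⟩
  intro x hx
  by_contra hne'
  have hxx : x ≠ x₀ := hne'
  obtain ⟨p, hp⟩ := hne x
  have hp' : p ∈ (F x : Set P) := Finset.mem_coe.mpr hp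
  have hR : p ∈ {p : P | ∃ s : X, s ≠ x₀ ∧ (F s : Set P) = {p}} := hreal x hxx hp'
  have h0 := part1 x hx
  have : p ∈ (F x : Set P) ∩ {p : P | ∃ s : X, s ≠ x₀ ∧ (F s : Set P) = {p}} := ⟨hp', hR⟩
  rw [h0] at this
  exact this
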